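/- Let M be the metric fan and G the Megrelishvili group with the compact-open topology, acting on M by evaluation. If f : M → ℝ is a bounded continuous function that is π-uniform for this action, then f(eₙ) converges to f(0) as n → ∞. -/

import Mathlib

/-!
A neighbourhood of the identity in the compact-open topology contains every homeomorphism
fixing some compact set `K` pointwise, and a compact subset of `ℓ²` reaches height `≥ c` on
only finitely many spokes. Hence, for `n` large, any increasing homeomorphism of
`[1/(j+2), 1/(j+1)]` fixing the endpoints, carried to the `n`-th spoke, belongs to the
Megrelishvili group and to the given neighbourhood. Moving the midpoint to an arbitrary point
of that interval shows that `f` varies by at most `2ε` there. Telescoping over `j < k`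
compares `f eₙ` with `f (eₙ / (k+1))`, and continuity of `f` at `0`, uniform along the
spokes, finishes the proof.
-/

noncomputable section

/-- The group of self-homeomorphisms of a topological space, under composition. -/
instance homeoGroup (X : Type*) [TopologicalSpace X] : Group (X ≃ₜ X) where
  mul a b := b.trans a
  one := Homeomorph.refl X
  inv := Homeomorph.symm
  mul_assoc a b c := Homeomorph.ext fun _ => rfl
  one_mul a := Homeomorph.ext fun _ => rfl
  mul_one a := Homeomorph.ext fun _ => rfl
  inv_mul_cancel a := Homeomorph.ext fun x => a.symm_apply_apply x

/-- The real Hilbert space `ℓ²(ℕ₊)`. -/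
abbrev FanAmbient : Type := lp (fun _ : ℕ+ => ℝ) 2

/-- The `n`-th basic vector `eₙ` of `ℓ²(ℕ₊)`, `n ≥ 1`. -/
def fanBasis (n : ℕ+) : FanAmbient := lp.single 2 n 1

/-- The metric fan: the union of the straight-line segments `[0, eₙ]`, `n ≥ 1`,
inside `ℓ²(ℕ₊)`, with the subspace topology. -/
def MetricFan : Set FanAmbient := ⋃ n : ℕ+, segment ℝ 0 (fanBasis n)

/-- The marked points of the metric fan: the points `(1/k)eₙ`, `k, n ≥ 1`. -/
def FanMarked : Set ↥MetricFan :=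
  {x | ∃ k n : ℕ+, (x : FanAmbient) = ((k : ℝ))⁻¹ • fanBasis n}

/-- The Megrelishvili group: all homeomorphisms of the metric fan fixing every
marked point. -/
def MegGroup : Subgroup (↥MetricFan ≃ₜ ↥MetricFan) where
  carrier := {g | ∀ x ∈ FanMarked, g x = x}
  one_mem' := fun x _ => rfl
  mul_mem' := by
    intro a b ha hb x hx
    show a (b x) = x
    rw [hb x hx, ha x hx]
  inv_mem' := by
    intro a ha x hx
    show a.symm x = x
    conv_lhs => rw [← ha x hx]
    exact a.symm_apply_apply x

/-- The Megrelishvili group carries the compact-open topology. -/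
instance : TopologicalSpace MegGroup :=
  TopologicalSpace.induced
    (fun g : MegGroup => toContinuousMap (g : ↥MetricFan ≃ₜ ↥MetricFan))
    ContinuousMap.compactOpen

/-- The endpoint `eₙ` of the metric fan. -/
def fanPoint (n : ℕ+) : ↥MetricFan :=
  ⟨fanBasis n, Set.mem_iUnion.2 ⟨n, right_mem_segment ℝ 0 (fanBasis n)⟩⟩

/-- The base point `0` of the metric fan. -/
def fanZero : ↥MetricFan :=
  ⟨0, Set.mem_iUnion.2 ⟨1, left_mem_segment ℝ 0 (fanBasis 1)⟩⟩

open Filter Set Topology Metric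

theorem ContinuousMap.exists_isCompact_forall_eqOn_mem_of_mem_nhds {X Y : Type*}
    [TopologicalSpace X] [TopologicalSpace Y] {f : C(X, Y)} {W : Set C(X, Y)} (hW : W ∈ 𝓝 f) :
    ∃ K : Set X, IsCompact K ∧ ∀ g : C(X, Y), EqOn g f K → g ∈ W := by
  obtain ⟨S, hSfin, hS, hSW⟩ := ContinuousMap.mem_nhds_iff.1 hW
  refine ⟨⋃ KU ∈ S, KU.1, hSfin.isCompact_biUnion fun KU hKU => (hS _ _ hKU).1,
    fun g hg => ?_⟩
  refine hSW fun K U hKU x hx => ?_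
  rw [hg (mem_biUnion hKU hx)]
  exact (hS K U hKU).2.2 hx

theorem IsCompact.finite_setOf_inter_nonempty_of_pairwise_le_dist {X ι : Type*}
    [PseudoMetricSpace X] {K : Set X} (hK : IsCompact K) {c : ℝ} (hc : 0 < c) {A : ι → Set X}
    (hA : Pairwise fun i j => ∀ y ∈ A i, ∀ z ∈ A j, c ≤ dist y z) :
    {i | (A i ∩ K).Nonempty}.Finite := by
  obtain ⟨t, -, htfin, hKt⟩ := finite_cover_balls_of_compact hK (half_pos hc)
  refine (htfin.biUnion fun z _ =>
    Subsingleton.finite (s := {i | (A i ∩ ball z (c / 2)).Nonempty}) ?_).subset ?_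
  · rintro i ⟨y, hyi, hyz⟩ j ⟨y', hyj, hyz'⟩
    by_contra hij
    have := hA hij y hyi y' hyj
    have := dist_triangle_right y y' z
    rw [mem_ball] at hyz hyz'
    linarith
  · rintro i ⟨y, hyi, hyK⟩
    obtain ⟨z, hz, hyz⟩ := mem_iUnion₂.1 (hKt hyK)
    exact mem_iUnion₂.2 ⟨z, hz, y, hyi, hyz⟩

theorem LipschitzWith.strictMono_add_mul {h : ℝ → ℝ} (hh : LipschitzWith 1 h) {c : ℝ}
    (hc : |c| < 1) : StrictMono fun t => t + c * h t := by
  intro s t hst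
  have hdist : |h t - h s| ≤ t - s := by
    simpa [Real.dist_eq, abs_of_pos (sub_pos.2 hst)] using hh.dist_le_mul t s
  have : |c * (h t - h s)| < t - s := by
    rw [abs_mul]
    calc |c| * |h t - h s| ≤ |c| * (t - s) := by gcongr
      _ < t - s := mul_lt_of_lt_one_left (sub_pos.2 hst) hc
  have := (abs_lt.1 this).1
  rw [mul_sub] at this
  show s + c * h s < t + c * h t
  linarith

def tent (p q t : ℝ) : ℝ := max 0 (min (t - p) (q - t))

lemma tent_of_notMem_Ioo {p q t : ℝ} (ht : t ∉ Ioo p q) : tent p q t = 0 := by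
  rw [mem_Ioo, not_and_or, not_lt, not_lt] at ht
  refine max_eq_left ?_
  rcases ht with ht | ht
  · exact (min_le_left _ _).trans (by linarith)
  · exact (min_le_right _ _).trans (by linarith)

lemma tent_midpoint {p q : ℝ} (hpq : p ≤ q) : tent p q ((p + q) / 2) = (q - p) / 2 := by
  rw [tent, show (p + q) / 2 - p = (q - p) / 2 by ring, show q - (p + q) / 2 = (q - p) / 2 by ring,
    min_self, max_eq_right (by linarith)]

lemma lipschitzWith_tent (p q : ℝ) : LipschitzWith 1 (tent p q) := by
  unfold tent
  simpa using (((LipschitzWith.id.sub (LipschitzWith.const p)).min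
    ((LipschitzWith.const q).sub LipschitzWith.id)).const_max 0)

theorem exists_orderIso_apply_midpoint_eq_of_mem_Ioo {p q u : ℝ} (hu : u ∈ Ioo p q) :
    ∃ φ : ℝ ≃o ℝ, (∀ t ∉ Ioo p q, φ t = t) ∧ φ ((p + q) / 2) = u := by
  have hqp : 0 < q - p := by linarith [hu.1, hu.2]
  set c := (2 * u - (p + q)) / (q - p) with hc_def
  have hc : |c| < 1 := by
    rw [abs_lt, lt_div_iff₀ hqp, div_lt_iff₀ hqp]
    constructor <;> linarith [hu.1, hu.2]
  set F : ℝ → ℝ := fun t => t + c * tent p q t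
  have hFfix : ∀ t ∉ Ioo p q, F t = t := fun t ht => by simp [F, tent_of_notMem_Ioo ht]
  have hmono : StrictMono F := (lipschitzWith_tent p q).strictMono_add_mul hc
  have hsurj : Function.Surjective F := by
    refine Continuous.surjective
      (continuous_id.add (continuous_const.mul (lipschitzWith_tent p q).continuous)) ?_ ?_
    · refine tendsto_id.congr' ?_
      filter_upwards [eventually_ge_atTop q] with t ht
      exact (hFfix t fun h => h.2.not_ge ht).symm
    · refine tendsto_id.congr' ?_
      filter_upwards [eventually_le_atBot p] with t ht
      exact (hFfix t fun h => h.1.not_ge ht).symm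
  refine ⟨hmono.orderIsoOfSurjective F hsurj, hFfix, ?_⟩
  change (p + q) / 2 + c * tent p q ((p + q) / 2) = u
  rw [tent_midpoint (by linarith), hc_def]
  field_simp
  ring

theorem dist_le_two_mul_of_forall_mem_Ioo {Y : Type*} [PseudoMetricSpace Y] {g : ℝ → Y}
    {p q m ε : ℝ} (hpq : p < q) (hg : ContinuousOn g (Icc p q))
    (h : ∀ u ∈ Ioo p q, dist (g m) (g u) ≤ ε) : dist (g q) (g p) ≤ 2 * ε := by
  have hIcc : Icc p q ⊆ Icc p q ∩ g ⁻¹' closedBall (g m) ε :=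
    calc Icc p q = closure (Ioo p q) := (closure_Ioo hpq.ne).symm
      _ ⊆ Icc p q ∩ g ⁻¹' closedBall (g m) ε := closure_minimal
        (fun u hu => ⟨Ioo_subset_Icc_self hu, by
          rw [mem_preimage, mem_closedBall, dist_comm]; exact h u hu⟩)
        (hg.preimage_isClosed_of_isClosed isClosed_Icc isClosed_closedBall)
  have hq := (hIcc (right_mem_Icc.2 hpq.le)).2
  have hp := (hIcc (left_mem_Icc.2 hpq.le)).2
  rw [mem_preimage, mem_closedBall] at hp hq
  linarith [dist_triangle_right (g q) (g p) (g m)]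

lemma smul_fanBasis_apply (t : ℝ) (m n : ℕ+) :
    (t • fanBasis m : FanAmbient) n = if n = m then t else 0 := by
  rw [lp.coeFn_smul, Pi.smul_apply, fanBasis, lp.single_apply, Pi.single_apply]
  split_ifs <;> simp

lemma add_smul_fanBasis_apply_self (y : FanAmbient) (c : ℝ) (n : ℕ+) :
    (y + c • fanBasis n : FanAmbient) n = y n + c := by
  rw [lp.coeFn_add, Pi.add_apply, smul_fanBasis_apply, if_pos rfl]

lemma continuous_apply_fanAmbient (n : ℕ+) : Continuous fun y : FanAmbient => y n :=
  (lp.evalCLM ℝ (fun _ : ℕ+ => ℝ) 2 n).continuous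

lemma le_dist_smul_fanBasis {m n : ℕ+} (hmn : m ≠ n) (s t : ℝ) :
    s ≤ dist (s • fanBasis m) (t • fanBasis n) := by
  have h := lp.norm_apply_le_norm (by norm_num : (2 : ENNReal) ≠ 0)
    (s • fanBasis m - t • fanBasis n) m
  rw [lp.coeFn_sub, Pi.sub_apply, smul_fanBasis_apply, smul_fanBasis_apply, if_pos rfl,
    if_neg hmn, sub_zero, Real.norm_eq_abs] at h
  exact (le_abs_self s).trans (h.trans_eq (dist_eq_norm _ _).symm)

theorem IsCompact.eventually_smul_fanBasis_notMem {K : Set FanAmbient} (hK : IsCompact K) {c : ℝ}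
    (hc : 0 < c) : ∀ᶠ n in atTop, ∀ t, c ≤ t → t • fanBasis n ∉ K := by
  have hsep : Pairwise fun m n : ℕ+ => ∀ y ∈ (· • fanBasis m) '' Ici c,
      ∀ z ∈ (· • fanBasis n) '' Ici c, c ≤ dist y z := by
    rintro m n hmn _ ⟨s, hs, rfl⟩ _ ⟨t, -, rfl⟩
    exact hs.trans (le_dist_smul_fanBasis hmn s t)
  filter_upwards [(hK.finite_setOf_inter_nonempty_of_pairwise_le_dist hc
    hsep).eventually_cofinite_notMem.filter_mono atTop_le_cofinite] with n hn t ht htK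
  exact hn ⟨_, ⟨t, ht, rfl⟩, htK⟩

lemma mem_metricFan_iff {x : FanAmbient} :
    x ∈ MetricFan ↔ ∃ n : ℕ+, ∃ t ∈ Icc (0 : ℝ) 1, t • fanBasis n = x := by
  simp [MetricFan, segment_eq_image]

lemma smul_fanBasis_mem_metricFan (n : ℕ+) {t : ℝ} (ht : t ∈ Icc (0 : ℝ) 1) :
    t • fanBasis n ∈ MetricFan :=
  mem_metricFan_iff.2 ⟨n, t, ht, rfl⟩

def spokePoint (n : ℕ+) (t : ℝ) : MetricFan :=
  ⟨(projIcc 0 1 zero_le_one t : ℝ) • fanBasis n,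
    smul_fanBasis_mem_metricFan n (projIcc _ _ _ t).2⟩

lemma coe_spokePoint (n : ℕ+) {t : ℝ} (ht : t ∈ Icc (0 : ℝ) 1) :
    (spokePoint n t : FanAmbient) = t • fanBasis n := by
  simp [spokePoint, projIcc_of_mem _ ht]

lemma continuous_spokePoint (n : ℕ+) : Continuous (spokePoint n) :=
  ((continuous_subtype_val.comp continuous_projIcc).smul continuous_const).subtype_mk _

lemma exists_spokePoint_eq (x : MetricFan) :
    ∃ m : ℕ+, ∃ t ∈ Icc (0 : ℝ) 1, spokePoint m t = x := by
  obtain ⟨m, t, ht, hx⟩ := mem_metricFan_iff.1 x.2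
  exact ⟨m, t, ht, Subtype.ext ((coe_spokePoint m ht).trans hx)⟩

lemma spokePoint_one (n : ℕ+) : spokePoint n 1 = fanPoint n :=
  Subtype.ext ((coe_spokePoint n (right_mem_Icc.2 zero_le_one)).trans (one_smul ℝ _))

lemma dist_spokePoint_fanZero (n : ℕ+) {t : ℝ} (ht : t ∈ Icc (0 : ℝ) 1) :
    dist (spokePoint n t) fanZero = t := by
  rw [Subtype.dist_eq, coe_spokePoint n ht, fanZero, dist_zero_right, norm_smul, fanBasis,
    lp.norm_single (by norm_num), norm_one, mul_one, Real.norm_of_nonneg ht.1]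

def spokeHomeomorph (n : ℕ+) (φ : ℝ ≃o ℝ) : FanAmbient ≃ₜ FanAmbient where
  toFun y := y + (φ (y n) - y n) • fanBasis n
  invFun y := y + (φ.symm (y n) - y n) • fanBasis n
  left_inv y := by
    dsimp only
    rw [add_smul_fanBasis_apply_self, add_sub_cancel, φ.symm_apply_apply, add_assoc, ← add_smul]
    simp
  right_inv y := by
    dsimp only
    rw [add_smul_fanBasis_apply_self, add_sub_cancel, φ.apply_symm_apply, add_assoc, ← add_smul]
    simp
  continuous_toFun := continuous_id.add (((φ.continuous.comp (continuous_apply_fanAmbient n)).sub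
    (continuous_apply_fanAmbient n)).smul continuous_const)
  continuous_invFun := continuous_id.add (((φ.symm.continuous.comp
    (continuous_apply_fanAmbient n)).sub (continuous_apply_fanAmbient n)).smul continuous_const)

lemma spokeHomeomorph_symm (n : ℕ+) (φ : ℝ ≃o ℝ) :
    (spokeHomeomorph n φ).symm = spokeHomeomorph n φ.symm := rfl

lemma spokeHomeomorph_smul_fanBasis (n : ℕ+) {φ : ℝ ≃o ℝ} (h0 : φ 0 = 0) (m : ℕ+)
    (t : ℝ) :
    spokeHomeomorph n φ (t • fanBasis m) = (if m = n then φ t else t) • fanBasis m := by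
  change t • fanBasis m + _ = _
  rw [smul_fanBasis_apply]
  split_ifs with hnm hmn hmn
  · subst hnm; rw [← add_smul, add_sub_cancel]
  · exact absurd hnm.symm hmn
  · exact absurd hmn.symm hnm
  · rw [h0, sub_zero, zero_smul, add_zero]

lemma spokeHomeomorph_mem_metricFan (n : ℕ+) {φ : ℝ ≃o ℝ} (h0 : φ 0 = 0) (h1 : φ 1 = 1)
    {x : FanAmbient} (hx : x ∈ MetricFan) : spokeHomeomorph n φ x ∈ MetricFan := by
  obtain ⟨m, t, ht, rfl⟩ := mem_metricFan_iff.1 hx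
  rw [spokeHomeomorph_smul_fanBasis n h0]
  refine smul_fanBasis_mem_metricFan m ?_
  split_ifs
  · simpa [h0, h1] using φ.monotone.mapsTo_Icc ht
  · exact ht

def fanSpokeHomeomorph (n : ℕ+) (φ : ℝ ≃o ℝ) (h0 : φ 0 = 0) (h1 : φ 1 = 1) :
    MetricFan ≃ₜ MetricFan :=
  (spokeHomeomorph n φ).subtype fun x => ⟨spokeHomeomorph_mem_metricFan n h0 h1, fun hx => by
    simpa only [← spokeHomeomorph_symm, Homeomorph.symm_apply_apply] using
      spokeHomeomorph_mem_metricFan n (φ := φ.symm)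
      (φ.symm_apply_eq.2 h0.symm) (φ.symm_apply_eq.2 h1.symm) hx⟩

lemma fanSpokeHomeomorph_spokePoint (n : ℕ+) {φ : ℝ ≃o ℝ} (h0 : φ 0 = 0) (h1 : φ 1 = 1)
    (m : ℕ+) {t : ℝ} (ht : t ∈ Icc (0 : ℝ) 1) :
    fanSpokeHomeomorph n φ h0 h1 (spokePoint m t) = spokePoint m (if m = n then φ t else t) := by
  have hφt : (if m = n then φ t else t) ∈ Icc (0 : ℝ) 1 := by
    split_ifs
    · simpa [h0, h1] using φ.monotone.mapsTo_Icc ht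
    · exact ht
  apply Subtype.ext
  change spokeHomeomorph n φ (spokePoint m t) = _
  rw [coe_spokePoint m ht, coe_spokePoint m hφt, spokeHomeomorph_smul_fanBasis n h0]

lemma fanSpokeHomeomorph_mem_megGroup (n : ℕ+) {φ : ℝ ≃o ℝ} (h0 : φ 0 = 0) (h1 : φ 1 = 1)
    (hφ : ∀ k : ℕ+, φ (k : ℝ)⁻¹ = (k : ℝ)⁻¹) :
    fanSpokeHomeomorph n φ h0 h1 ∈ MegGroup := by
  rintro x ⟨k, m, hx⟩
  have hk : ((k : ℝ))⁻¹ ∈ Icc (0 : ℝ) 1 :=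
    ⟨by positivity, inv_le_one_of_one_le₀ (Nat.one_le_cast.2 k.pos)⟩
  obtain rfl : x = spokePoint m (k : ℝ)⁻¹ := Subtype.ext (hx.trans (coe_spokePoint m hk).symm)
  rw [fanSpokeHomeomorph_spokePoint n h0 h1 m hk, hφ, ite_self]

theorem MegGroup.exists_isCompact_forall_apply_eq_self_mem {V : Set MegGroup} (hV : V ∈ 𝓝 1) :
    ∃ K : Set MetricFan, IsCompact K ∧
      ∀ v : MegGroup, (∀ x ∈ K, (v : MetricFan ≃ₜ MetricFan) x = x) → v ∈ V := by
  obtain ⟨W, hW, hWV⟩ := (mem_nhds_induced _ _ _).1 hV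
  obtain ⟨K, hK, hKW⟩ := ContinuousMap.exists_isCompact_forall_eqOn_mem_of_mem_nhds hW
  exact ⟨K, hK, fun v hv => hWV (hKW _ hv)⟩

theorem MegGroup.exists_mem_moving_spokePoint {p q u : ℝ} (hp : 0 < p) (hq : q ≤ 1)
    (hmarked : ∀ k : ℕ+, (k : ℝ)⁻¹ ∉ Ioo p q) (hu : u ∈ Ioo p q) (n : ℕ+) :
    ∃ v : MegGroup,
      (∀ m : ℕ+, ∀ t ∈ Icc (0 : ℝ) 1, (m = n → t ∉ Ioo p q) →
        (v : MetricFan ≃ₜ MetricFan) (spokePoint m t) = spokePoint m t) ∧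
      (v : MetricFan ≃ₜ MetricFan) (spokePoint n ((p + q) / 2)) = spokePoint n u := by
  obtain ⟨φ, hφ, hφu⟩ := exists_orderIso_apply_midpoint_eq_of_mem_Ioo hu
  have h0 : φ 0 = 0 := hφ 0 fun h => lt_asymm hp h.1
  have h1 : φ 1 = 1 := hφ 1 fun h => not_lt.2 hq h.2
  refine ⟨⟨fanSpokeHomeomorph n φ h0 h1,
    fanSpokeHomeomorph_mem_megGroup n h0 h1 fun k => hφ _ (hmarked k)⟩, ?_, ?_⟩
  · intro m t ht htpq
    refine (fanSpokeHomeomorph_spokePoint n h0 h1 m ht).trans ?_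
    split_ifs with hmn
    · rw [hφ t (htpq hmn)]
    · rfl
  · have hμ : (p + q) / 2 ∈ Icc (0 : ℝ) 1 :=
      ⟨by linarith [hu.1, hu.2], by linarith [hu.1, hu.2]⟩
    rw [fanSpokeHomeomorph_spokePoint n h0 h1 n hμ, if_pos rfl, hφu]

def IsPiUniform (f : MetricFan → ℝ) : Prop :=
  ∀ ε : ℝ, 0 < ε → ∃ V ∈ 𝓝 (1 : MegGroup), ∀ x : MetricFan, ∀ v ∈ V,
    |f x - f ((v : MetricFan ≃ₜ MetricFan) x)| < ε

theorem IsPiUniform.tendsto_sub_spokePoint {f : MetricFan → ℝ} (hu : IsPiUniform f)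
    (hc : Continuous f) {p q : ℝ} (hp : 0 < p) (hpq : p < q) (hq : q ≤ 1)
    (hmarked : ∀ k : ℕ+, (k : ℝ)⁻¹ ∉ Ioo p q) :
    Tendsto (fun n => f (spokePoint n q) - f (spokePoint n p)) atTop (𝓝 0) := by
  rw [Metric.tendsto_nhds]
  intro ε hε
  obtain ⟨V, hV, hfV⟩ := hu (ε / 3) (by positivity)
  obtain ⟨K, hK, hKV⟩ := MegGroup.exists_isCompact_forall_apply_eq_self_mem hV
  filter_upwards [(hK.image continuous_subtype_val).eventually_smul_fanBasis_notMem hp]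
    with n hn
  have hmove : ∀ u ∈ Ioo p q,
      dist (f (spokePoint n ((p + q) / 2))) (f (spokePoint n u)) ≤ ε / 3 := by
    intro u hu'
    obtain ⟨v, hv, hvu⟩ := MegGroup.exists_mem_moving_spokePoint hp hq hmarked hu' n
    have hvK : ∀ x ∈ K, (v : MetricFan ≃ₜ MetricFan) x = x := by
      intro x hx
      obtain ⟨m, t, ht, rfl⟩ := exists_spokePoint_eq x
      refine hv m t ht fun hmn htpq => hn t htpq.1.le ⟨_, hx, ?_⟩
      rw [coe_spokePoint m ht, hmn]
    have := hfV (spokePoint n ((p + q) / 2)) v (hKV v hvK)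
    rw [hvu, ← Real.dist_eq] at this
    exact this.le
  have := dist_le_two_mul_of_forall_mem_Ioo (g := fun t => f (spokePoint n t)) hpq
    (hc.comp (continuous_spokePoint n)).continuousOn hmove
  rw [dist_zero_right, ← dist_eq_norm]
  linarith

lemma inv_natCast_notMem_Ioo (k : ℕ) (j : ℕ) :
    (k : ℝ)⁻¹ ∉ Ioo (((j + 1 : ℕ) : ℝ) + 1)⁻¹ ((j : ℝ) + 1)⁻¹ := by
  rintro ⟨hlo, hhi⟩
  have hk : (0 : ℝ) < k := inv_pos.1 (lt_trans (by positivity) hlo)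
  rw [inv_lt_inv₀ (by positivity) hk] at hlo
  rw [inv_lt_inv₀ hk (by positivity)] at hhi
  push_cast at hlo hhi
  have h1 : j + 1 < k := by exact_mod_cast hhi
  have h2 : k < j + 2 := by exact_mod_cast (show (k : ℝ) < j + 2 by linarith)
  omega

theorem IsPiUniform.tendsto_sub_spokePoint_inv {f : MetricFan → ℝ} (hu : IsPiUniform f)
    (hc : Continuous f) (k : ℕ) :
    Tendsto (fun n => f (fanPoint n) - f (spokePoint n ((k : ℝ) + 1)⁻¹)) atTop (𝓝 0) := by
  have hstep : ∀ j : ℕ, Tendsto (fun n => f (spokePoint n ((j : ℝ) + 1)⁻¹) -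
      f (spokePoint n (((j + 1 : ℕ) : ℝ) + 1)⁻¹)) atTop (𝓝 0) := fun j =>
    hu.tendsto_sub_spokePoint hc (by positivity)
      (inv_strictAnti₀ (by positivity) (by push_cast; linarith))
      (inv_le_one_of_one_le₀ (by linarith [j.cast_nonneg (α := ℝ)]))
      fun k' => inv_natCast_notMem_Ioo k' j
  have hsum := tendsto_finsetSum (Finset.range k) fun j _ => hstep j
  rw [Finset.sum_const_zero] at hsum
  refine hsum.congr fun n => ?_
  refine (Finset.sum_range_sub' (fun j : ℕ => f (spokePoint n ((j : ℝ) + 1)⁻¹)) k).trans ?_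
  simp [spokePoint_one]

theorem stmt_13_general (f : ↥MetricFan → ℝ) (hc : Continuous f)
    (hu : ∀ ε : ℝ, 0 < ε → ∃ V ∈ nhds (1 : MegGroup), ∀ x : ↥MetricFan, ∀ v ∈ V,
      |f x - f ((v : ↥MetricFan ≃ₜ ↥MetricFan) x)| < ε) :
    Filter.Tendsto (fun n : ℕ+ => f (fanPoint n)) Filter.atTop (nhds (f fanZero)) := by
  rw [Metric.tendsto_nhds]
  intro η hη
  obtain ⟨δ, hδ, hfδ⟩ := Metric.continuousAt_iff.1 hc.continuousAt (η / 2) (half_pos hη)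
  obtain ⟨k, hk⟩ := exists_nat_one_div_lt hδ
  have hkIcc : ((k : ℝ) + 1)⁻¹ ∈ Icc (0 : ℝ) 1 :=
    ⟨by positivity, inv_le_one_of_one_le₀ (by linarith [k.cast_nonneg (α := ℝ)])⟩
  filter_upwards [Metric.tendsto_nhds.1
    (IsPiUniform.tendsto_sub_spokePoint_inv hu hc k) _ (half_pos hη)] with n hn
  have hnear := hfδ ((dist_spokePoint_fanZero n hkIcc).trans_lt (by simpa using hk))
  rw [dist_zero_right, ← dist_eq_norm] at hn
  linarith [dist_triangle (f (fanPoint n)) (f (spokePoint n ((k : ℝ) + 1)⁻¹)) (f fanZero)]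

theorem stmt_13 (f : ↥MetricFan → ℝ) (hc : Continuous f)
    (hb : ∃ C : ℝ, ∀ x : ↥MetricFan, |f x| ≤ C)
    (hu : ∀ ε : ℝ, 0 < ε → ∃ V ∈ nhds (1 : MegGroup), ∀ x : ↥MetricFan, ∀ v ∈ V,
      |f x - f ((v : ↥MetricFan ≃ₜ ↥MetricFan) x)| < ε) :
    Filter.Tendsto (fun n : ℕ+ => f (fanPoint n)) Filter.atTop (nhds (f fanZero)) :=
  stmt_13_general f hc hu
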